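/- arXiv:2604.13758 — 3 statements merged into one kernel-verified Lean document; each statement's English description precedes it below -/
import Mathlib

section
/- For every natural number k ≥ 1 and every real p > 1 there exists a constant C_{p,k} > 0, depending only on p and k, such that for all x_1, ..., x_k ∈ ℝ^n one has | |x_1 + ... + x_k|^p − (|x_1|^p + ... + |x_k|^p) | ≤ C_{p,k} · Σ_{i≠j} |x_i|^{p-1} |x_j|. -/
lemma aux1 {p a b : ℝ} (hp : 1 ≤ p) (hb : 0 ≤ b) (hba : b ≤ a) :
    a ^ p - b ^ p ≤ p * a ^ (p - 1) * (a - b) := by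
  rcases eq_or_lt_of_le (hb.trans hba) with h | ha
  · have hb0 : b = 0 := le_antisymm (hba.trans h.symm.le) hb
    have ha0 : a = 0 := h.symm
    simp [ha0, hb0, Real.zero_rpow (by linarith : p ≠ 0)]
  · have hs : -1 ≤ b / a - 1 := by
      have : 0 ≤ b / a := div_nonneg hb ha.le
      linarith
    have key := one_add_mul_self_le_rpow_one_add hs hp
    have h1 : (1 + (b / a - 1)) = b / a := by ring
    rw [h1, Real.div_rpow hb ha.le] at key
    have hap : 0 < a ^ p := Real.rpow_pos_of_pos ha p
    have key2 : a ^ p * (1 + p * (b / a - 1)) ≤ b ^ p := by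
      calc a ^ p * (1 + p * (b / a - 1)) ≤ a ^ p * (b ^ p / a ^ p) :=
            mul_le_mul_of_nonneg_left key hap.le
        _ = b ^ p := by field_simp
    have e : a ^ (p - 1) = a ^ p / a := Real.rpow_sub_one ha.ne' p
    rw [e]
    have key2' : a ^ p * (1 + p * (b / a - 1)) * a ≤ b ^ p * a :=
      mul_le_mul_of_nonneg_right key2 ha.le
    have expand : a ^ p * (1 + p * (b / a - 1)) * a = a ^ p * (a + p * (b - a)) := by
      field_simp
    rw [expand] at key2'
    have goal' : (a ^ p - b ^ p) * a ≤ p * a ^ p * (a - b) := by nlinarith [key2']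
    have e2 : p * (a ^ p / a) * (a - b) = p * a ^ p * (a - b) / a := by ring
    rw [e2, le_div_iff₀ ha]
    linarith [goal']

lemma aux2 {p s b t : ℝ} (hp : 1 ≤ p) (hs : 0 ≤ s) (hb : 0 ≤ b)
    (hst : |s - b| ≤ t) : |s ^ p - b ^ p| ≤ p * (b + t) ^ (p - 1) * t := by
  have ht0 : 0 ≤ t := le_trans (abs_nonneg _) hst
  have hp1 : 0 ≤ p - 1 := by linarith
  rcases le_total s b with h | h
  · have h1 : s ^ p ≤ b ^ p := Real.rpow_le_rpow hs h (by linarith)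
    rw [abs_of_nonpos (by linarith)]
    have h2 := aux1 hp hs h
    have h3 : b ^ (p-1) ≤ (b + t) ^ (p-1) :=
      Real.rpow_le_rpow hb (by linarith) hp1
    have h4 : b - s ≤ t := by rw [abs_of_nonpos (by linarith)] at hst; linarith
    have h5 : 0 ≤ b ^ (p-1) := Real.rpow_nonneg hb _
    have h6 : 0 < p := by linarith
    nlinarith [mul_le_mul h3 h4 (by linarith) (Real.rpow_nonneg (by linarith) (p-1))]
  · have h1 : b ^ p ≤ s ^ p := Real.rpow_le_rpow hb h (by linarith)
    rw [abs_of_nonneg (by linarith)]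
    have h2 := aux1 hp hb h
    have hsbt : s ≤ b + t := by rw [abs_of_nonneg (by linarith)] at hst; linarith
    have h3 : s ^ (p-1) ≤ (b + t) ^ (p-1) :=
      Real.rpow_le_rpow hs hsbt hp1
    have h4 : s - b ≤ t := by rw [abs_of_nonneg (by linarith)] at hst; linarith
    have h6 : 0 < p := by linarith
    nlinarith [mul_le_mul h3 h4 (by linarith) (Real.rpow_nonneg (by linarith) (p-1))]

theorem stmt2 (k : ℕ) (hk : 1 ≤ k) (p : ℝ) (hp : 1 < p) :
    ∃ C : ℝ, 0 < C ∧ ∀ (n : ℕ) (x : Fin k → EuclideanSpace ℝ (Fin n)),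
      |‖∑ i, x i‖ ^ p - ∑ i, ‖x i‖ ^ p| ≤
        C * ∑ i, ∑ j ∈ Finset.univ.filter (· ≠ i), ‖x i‖ ^ (p - 1) * ‖x j‖ := by
  have hp0 : (0:ℝ) < p := by linarith
  have hk0 : (0:ℝ) < (k:ℝ) := by exact_mod_cast hk
  refine ⟨p * (k:ℝ) ^ (p - 1) + 1, by positivity, ?_⟩
  intro n x
  have : Nonempty (Fin k) := ⟨⟨0, hk⟩⟩
  obtain ⟨m, -, hm⟩ := Finset.exists_max_image Finset.univ (fun i => ‖x i‖)
    Finset.univ_nonempty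
  set b := ‖x m‖ with hbdef
  set t := ∑ j ∈ Finset.univ.erase m, ‖x j‖ with htdef
  have hb0 : 0 ≤ b := norm_nonneg _
  have ht0 : 0 ≤ t := Finset.sum_nonneg (fun j _ => norm_nonneg _)
  have hsum : ∑ i, x i = x m + ∑ j ∈ Finset.univ.erase m, x j :=
    (Finset.add_sum_erase _ _ (Finset.mem_univ m)).symm
  have hst : |‖∑ i, x i‖ - b| ≤ t := by
    calc |‖∑ i, x i‖ - ‖x m‖| ≤ ‖∑ i, x i - x m‖ := abs_norm_sub_norm_le _ _
      _ = ‖∑ j ∈ Finset.univ.erase m, x j‖ := by rw [hsum]; simp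
      _ ≤ t := norm_sum_le _ _
  have key := aux2 hp.le (norm_nonneg (∑ i, x i)) hb0 hst
  have hbt : b + t = ∑ i, ‖x i‖ := Finset.add_sum_erase Finset.univ (fun i => ‖x i‖) (Finset.mem_univ m)
  have hbtk : b + t ≤ (k:ℝ) * b := by
    rw [hbt]
    calc ∑ i, ‖x i‖ ≤ ∑ _i : Fin k, b :=
          Finset.sum_le_sum (fun i _ => hm i (Finset.mem_univ i))
      _ = (k:ℝ) * b := by simp [Finset.sum_const, nsmul_eq_mul]
  have h1 : (b + t) ^ (p-1) ≤ (k:ℝ) ^ (p-1) * b ^ (p-1) := by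
    calc (b + t) ^ (p-1) ≤ ((k:ℝ) * b) ^ (p-1) :=
          Real.rpow_le_rpow (by linarith) hbtk (by linarith)
      _ = (k:ℝ) ^ (p-1) * b ^ (p-1) := Real.mul_rpow hk0.le hb0
  -- each small term
  have h3 : ∀ i ∈ Finset.univ.erase m, ‖x i‖ ^ p ≤ b ^ (p-1) * ‖x i‖ := by
    intro i _
    rcases eq_or_ne ‖x i‖ 0 with h0 | h0
    · rw [h0, Real.zero_rpow (by linarith : p ≠ 0), mul_zero]
    · have e : ‖x i‖ ^ (p-1) = ‖x i‖ ^ p / ‖x i‖ := Real.rpow_sub_one h0 p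
      have : ‖x i‖ ^ p = ‖x i‖ ^ (p-1) * ‖x i‖ := by rw [e]; field_simp
      rw [this]
      exact mul_le_mul_of_nonneg_right
        (Real.rpow_le_rpow (norm_nonneg _) (hm i (Finset.mem_univ i)) (by linarith))
        (norm_nonneg _)
  have hsplit : ∑ i, ‖x i‖ ^ p = b ^ p + ∑ i ∈ Finset.univ.erase m, ‖x i‖ ^ p :=
    (Finset.add_sum_erase Finset.univ (fun i => ‖x i‖ ^ p) (Finset.mem_univ m)).symm
  set Sm := ∑ j ∈ Finset.univ.erase m, b ^ (p-1) * ‖x j‖ with hSm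
  have hSm0 : 0 ≤ Sm :=
    Finset.sum_nonneg fun j _ => mul_nonneg (Real.rpow_nonneg hb0 _) (norm_nonneg _)
  have hSmt : Sm = b ^ (p-1) * t := by rw [hSm, htdef, Finset.mul_sum]
  have htail : ∑ i ∈ Finset.univ.erase m, ‖x i‖ ^ p ≤ Sm := Finset.sum_le_sum h3
  have hmain : |‖∑ i, x i‖ ^ p - ∑ i, ‖x i‖ ^ p| ≤ (p * (k:ℝ) ^ (p-1) + 1) * Sm := by
    have habs : |‖∑ i, x i‖ ^ p - ∑ i, ‖x i‖ ^ p| ≤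
        |‖∑ i, x i‖ ^ p - b ^ p| + ∑ i ∈ Finset.univ.erase m, ‖x i‖ ^ p := by
      rw [hsplit]
      have := abs_sub (‖∑ i, x i‖ ^ p - b ^ p)
        (-(∑ i ∈ Finset.univ.erase m, ‖x i‖ ^ p))
      have htp0 : 0 ≤ ∑ i ∈ Finset.univ.erase m, ‖x i‖ ^ p :=
        Finset.sum_nonneg fun i _ => Real.rpow_nonneg (norm_nonneg _) _
      calc |‖∑ i, x i‖ ^ p - (b ^ p + ∑ i ∈ Finset.univ.erase m, ‖x i‖ ^ p)|
          = |(‖∑ i, x i‖ ^ p - b ^ p) + (-(∑ i ∈ Finset.univ.erase m, ‖x i‖ ^ p))| := by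
            ring_nf
        _ ≤ |‖∑ i, x i‖ ^ p - b ^ p| + |(-(∑ i ∈ Finset.univ.erase m, ‖x i‖ ^ p))| :=
            abs_add_le _ _
        _ = |‖∑ i, x i‖ ^ p - b ^ p| + ∑ i ∈ Finset.univ.erase m, ‖x i‖ ^ p := by
            rw [abs_neg, abs_of_nonneg htp0]
    have hkey2 : |‖∑ i, x i‖ ^ p - b ^ p| ≤ p * (k:ℝ) ^ (p-1) * Sm := by
      rw [hSmt]
      calc |‖∑ i, x i‖ ^ p - b ^ p| ≤ p * (b + t) ^ (p-1) * t := key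
        _ ≤ p * ((k:ℝ) ^ (p-1) * b ^ (p-1)) * t := by
            apply mul_le_mul_of_nonneg_right _ ht0
            exact mul_le_mul_of_nonneg_left h1 hp0.le
        _ = p * (k:ℝ) ^ (p-1) * (b ^ (p-1) * t) := by ring
    linarith
  refine hmain.trans ?_
  apply mul_le_mul_of_nonneg_left _ (by positivity)
  have hterm : Sm = ∑ j ∈ Finset.univ.filter (· ≠ m), ‖x m‖ ^ (p-1) * ‖x j‖ := by
    rw [hSm, Finset.filter_ne']
  rw [hterm]
  exact Finset.single_le_sum
    (f := fun i => ∑ j ∈ Finset.univ.filter (· ≠ i), ‖x i‖ ^ (p-1) * ‖x j‖)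
    (fun i _ => Finset.sum_nonneg fun j _ =>
      mul_nonneg (Real.rpow_nonneg (norm_nonneg _) _) (norm_nonneg _))
    (Finset.mem_univ m)
end

section
/- Let 1 < p ≤ 2 and let H : ℝ^n → [0,∞) be a norm of class C^2 on ℝ^n \ {0} such that the Hessian of H^p satisfies |∇²_ξ H^p(ξ)| ≤ C_{p,H} H(ξ)^{p−2} for all ξ ≠ 0. Define a(ξ) = (1/p)∇_ξ H^p(ξ) for ξ ≠ 0 and a(0) = 0. Then there exists a finite constant c such that |a(ξ+η) − a(ξ)| ≤ c · H(η)^{p−1} for all ξ ∈ ℝ^n and all η ∈ ℝ^n \ {0}. -/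
open scoped Classical in
noncomputable def stress {n : ℕ} (p : ℝ) (H : EuclideanSpace ℝ (Fin n) → ℝ) :
    EuclideanSpace ℝ (Fin n) → EuclideanSpace ℝ (Fin n) :=
  fun ξ => if ξ = 0 then 0 else (1 / p) • gradient (fun η => H η ^ p) ξ

/-!
Write `f = H ^ p`, so that `stress p H = (1/p) ∇f` away from the origin. Since `H` is a norm it is
Lipschitz, so `|∇H| ≤ C_H` and `|∇f(ξ)| ≤ p C_H H(ξ)^{p-1}`. If `H(ξ) ≤ 2 H(η)` both
`H(ξ)` and `H(ξ + η)` are at most `3 H(η)`, and this pointwise bound suffices. Otherwise every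
point `ζ` of the segment `[ξ, ξ + η]` has `H(ζ) ≥ H(ξ) - H(η) > H(η)`; as `p ≤ 2` the Hessian
bound gives `|∇²f(ζ)| ≤ C_{p,H} H(η)^{p-2}`, and the mean value inequality, together with
`|η| ≤ H(η) / c_H`, yields the claim.
-/

section Subadditive

variable {E : Type*} [NormedAddCommGroup E] [NormedSpace ℝ E] {H : E → ℝ}

lemma abs_sub_le_of_subadditive (Hadd : ∀ x y, H (x + y) ≤ H x + H y)
    (Hsmul : ∀ (c : ℝ) x, H (c • x) = |c| * H x) (x y : E) :
    |H x - H y| ≤ H (x - y) := by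
  have Hneg : H (y - x) = H (x - y) := by
    rw [← neg_sub, ← neg_one_smul ℝ (x - y), Hsmul, abs_neg, abs_one, one_mul]
  rw [abs_sub_le_iff]
  constructor
  · simpa using Hadd (x - y) y
  · simpa [Hneg] using Hadd (y - x) x

lemma nonneg_of_subadditive (Hadd : ∀ x y, H (x + y) ≤ H x + H y)
    (Hsmul : ∀ (c : ℝ) x, H (c • x) = |c| * H x) (x : E) : 0 ≤ H x := by
  simpa using (abs_nonneg _).trans (abs_sub_le_of_subadditive Hadd Hsmul x 0)

lemma norm_fderiv_le_of_subadditive (Hadd : ∀ x y, H (x + y) ≤ H x + H y)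
    (Hsmul : ∀ (c : ℝ) x, H (c • x) = |c| * H x) {C : ℝ} (hC : 0 ≤ C)
    (hHC : ∀ x, H x ≤ C * ‖x‖) (x : E) : ‖fderiv ℝ H x‖ ≤ C :=
  norm_fderiv_le_of_lip' ℝ hC <| Filter.Eventually.of_forall fun y =>
    (abs_sub_le_of_subadditive Hadd Hsmul y x).trans (hHC _)

lemma norm_fderiv_rpow_le {p C : ℝ} (hp : 0 ≤ p) {x : E} (hH : DifferentiableAt ℝ H x)
    (hHx : 0 < H x) (hC : ‖fderiv ℝ H x‖ ≤ C) :
    ‖fderiv ℝ (fun y => H y ^ p) x‖ ≤ p * C * H x ^ (p - 1) := by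
  have hpow : 0 ≤ p * H x ^ (p - 1) := by positivity
  rw [(hH.hasFDerivAt.rpow_const (Or.inl hHx.ne')).fderiv, norm_smul, Real.norm_eq_abs,
    abs_of_nonneg hpow]
  calc p * H x ^ (p - 1) * ‖fderiv ℝ H x‖ ≤ p * H x ^ (p - 1) * C := by gcongr
    _ = p * C * H x ^ (p - 1) := by ring

lemma sub_le_of_mem_segment_add (Hadd : ∀ x y, H (x + y) ≤ H x + H y)
    (Hsmul : ∀ (c : ℝ) x, H (c • x) = |c| * H x) {ξ η ζ : E} (hζ : ζ ∈ segment ℝ ξ (ξ + η)) :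
    H ξ - H η ≤ H ζ := by
  rw [segment_eq_image'] at hζ
  obtain ⟨t, ⟨ht0, ht1⟩, rfl⟩ := hζ
  have hdist := abs_sub_le_of_subadditive Hadd Hsmul ξ (ξ + t • η)
  rw [sub_add_cancel_left, ← neg_smul, Hsmul, abs_neg, abs_of_nonneg ht0] at hdist
  have hHη := nonneg_of_subadditive Hadd Hsmul η
  simp only [add_sub_cancel_left]
  linarith [(abs_sub_le_iff.mp hdist).1, mul_le_mul_of_nonneg_right ht1 hHη]

end Subadditive

lemma norm_fderiv_sub_le_of_norm_iteratedFDeriv_two_le {E F : Type*} [NormedAddCommGroup E]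
    [NormedSpace ℝ E] [NormedAddCommGroup F] [NormedSpace ℝ F] {f : E → F} {x y : E} {M : ℝ}
    (hf : ∀ z ∈ segment ℝ x y, DifferentiableAt ℝ (fderiv ℝ f) z)
    (hM : ∀ z ∈ segment ℝ x y, ‖iteratedFDeriv ℝ 2 f z‖ ≤ M) :
    ‖fderiv ℝ f y - fderiv ℝ f x‖ ≤ M * ‖y - x‖ := by
  refine (convex_segment x y).norm_image_sub_le_of_norm_fderiv_le hf (fun z hz => ?_)
    (left_mem_segment ℝ x y) (right_mem_segment ℝ x y)
  rw [← norm_iteratedFDeriv_one (𝕜 := ℝ), norm_iteratedFDeriv_fderiv]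
  exact hM z hz

section Gradient

variable {E : Type*} [NormedAddCommGroup E] [InnerProductSpace ℝ E] [CompleteSpace E]

lemma norm_gradient (f : E → ℝ) (x : E) : ‖gradient f x‖ = ‖fderiv ℝ f x‖ :=
  LinearIsometryEquiv.norm_map _ _

lemma norm_gradient_sub_gradient (f : E → ℝ) (x y : E) :
    ‖gradient f x - gradient f y‖ = ‖fderiv ℝ f x - fderiv ℝ f y‖ := by
  rw [gradient, gradient, ← map_sub, LinearIsometryEquiv.norm_map]

end Gradient

section Stress

variable {n : ℕ} {p : ℝ} {H : EuclideanSpace ℝ (Fin n) → ℝ}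

lemma norm_stress_le (hp : 0 < p) (Hadd : ∀ x y, H (x + y) ≤ H x + H y)
    (Hsmul : ∀ (c : ℝ) x, H (c • x) = |c| * H x) (Hpos : ∀ x, x ≠ 0 → 0 < H x)
    {C : ℝ} (hC : 0 ≤ C) (hHC : ∀ x, H x ≤ C * ‖x‖)
    (Hdiff : DifferentiableOn ℝ H ({0}ᶜ : Set (EuclideanSpace ℝ (Fin n)))) (x) :
    ‖stress p H x‖ ≤ C * H x ^ (p - 1) := by
  by_cases hx : x = 0
  · have H0 : H 0 = 0 := by simpa using Hsmul 0 0
    simp only [stress, hx, if_true, norm_zero, H0]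
    positivity
  have hgrad := norm_fderiv_rpow_le hp.le
    (Hdiff.differentiableAt (isOpen_compl_singleton.mem_nhds hx)) (Hpos x hx)
    (norm_fderiv_le_of_subadditive Hadd Hsmul hC hHC x)
  simpa [stress, hx, norm_smul, norm_gradient, abs_of_pos hp,
    inv_mul_le_iff₀ hp, mul_assoc] using hgrad

lemma norm_stress_add_sub_le_of_le_two_mul (hp : 1 ≤ p) (Hadd : ∀ x y, H (x + y) ≤ H x + H y)
    (Hsmul : ∀ (c : ℝ) x, H (c • x) = |c| * H x) (Hpos : ∀ x, x ≠ 0 → 0 < H x)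
    {C : ℝ} (hC : 0 ≤ C) (hHC : ∀ x, H x ≤ C * ‖x‖)
    (Hdiff : DifferentiableOn ℝ H ({0}ᶜ : Set (EuclideanSpace ℝ (Fin n)))) {ξ η}
    (hξ : H ξ ≤ 2 * H η) :
    ‖stress p H (ξ + η) - stress p H ξ‖ ≤ 2 * C * 3 ^ (p - 1) * H η ^ (p - 1) := by
  have hstress (x) (hx : H x ≤ 3 * H η) :
      ‖stress p H x‖ ≤ C * 3 ^ (p - 1) * H η ^ (p - 1) := by
    have hH_nonneg := nonneg_of_subadditive Hadd Hsmul
    calc ‖stress p H x‖ ≤ C * H x ^ (p - 1) :=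
          norm_stress_le (by linarith) Hadd Hsmul Hpos hC hHC Hdiff x
      _ ≤ C * (3 * H η) ^ (p - 1) :=
          mul_le_mul_of_nonneg_left (Real.rpow_le_rpow (hH_nonneg x) hx (by linarith)) hC
      _ = C * 3 ^ (p - 1) * H η ^ (p - 1) := by rw [Real.mul_rpow (by norm_num) (hH_nonneg η)]; ring
  calc ‖stress p H (ξ + η) - stress p H ξ‖ ≤ ‖stress p H (ξ + η)‖ + ‖stress p H ξ‖ :=
        norm_sub_le _ _
    _ ≤ C * 3 ^ (p - 1) * H η ^ (p - 1) + C * 3 ^ (p - 1) * H η ^ (p - 1) :=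
        add_le_add (hstress _ (by linarith [Hadd ξ η]))
          (hstress _ (by linarith [nonneg_of_subadditive Hadd Hsmul η]))
    _ = 2 * C * 3 ^ (p - 1) * H η ^ (p - 1) := by ring

lemma norm_stress_add_sub_le_of_two_mul_lt (hp1 : 1 ≤ p) (hp2 : p ≤ 2)
    (Hadd : ∀ x y, H (x + y) ≤ H x + H y) (Hsmul : ∀ (c : ℝ) x, H (c • x) = |c| * H x)
    (Hpos : ∀ x, x ≠ 0 → 0 < H x) {c : ℝ} (hc : 0 < c) (hcH : ∀ x, c * ‖x‖ ≤ H x)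
    (Hsmooth : ContDiffOn ℝ 2 H ({0}ᶜ : Set (EuclideanSpace ℝ (Fin n)))) {M : ℝ} (hM : 0 ≤ M)
    (hHess : ∀ x, x ≠ 0 → ‖iteratedFDeriv ℝ 2 (fun y => H y ^ p) x‖ ≤ M * H x ^ (p - 2))
    {ξ η} (hη : η ≠ 0) (hξ : 2 * H η < H ξ) :
    ‖stress p H (ξ + η) - stress p H ξ‖ ≤ M / (p * c) * H η ^ (p - 1) := by
  have hηpos := Hpos η hη
  have hseg (z) (hz : z ∈ segment ℝ ξ (ξ + η)) : H η < H z := by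
    linarith [sub_le_of_mem_segment_add Hadd Hsmul hz]
  have hne (z) (hz : z ∈ segment ℝ ξ (ξ + η)) : z ≠ 0 := by
    rintro rfl
    have H0 : H 0 = 0 := by simpa using Hsmul 0 0
    linarith [hseg 0 hz]
  have hC2 (z) (hz : z ≠ 0) : ContDiffAt ℝ 2 (fun y => H y ^ p) z :=
    (Hsmooth.contDiffAt (isOpen_compl_singleton.mem_nhds hz)).rpow_const_of_ne (Hpos z hz).ne'
  have hmv : ‖fderiv ℝ (fun y => H y ^ p) (ξ + η) - fderiv ℝ (fun y => H y ^ p) ξ‖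
      ≤ M * H η ^ (p - 2) * ‖η‖ := by
    have hbound := norm_fderiv_sub_le_of_norm_iteratedFDeriv_two_le
      (fun z hz => ((hC2 z (hne z hz)).fderiv_right (m := 1) le_rfl).differentiableAt one_ne_zero)
      fun z hz => (hHess z (hne z hz)).trans <| mul_le_mul_of_nonneg_left
        (Real.rpow_le_rpow_of_nonpos hηpos (hseg z hz).le (by linarith)) hM
    rwa [add_sub_cancel_left] at hbound
  have hη_norm : ‖η‖ ≤ H η / c := by rw [le_div_iff₀ hc, mul_comm]; exact hcH η
  have hpow : H η ^ (p - 2) * H η = H η ^ (p - 1) := by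
    rw [← Real.rpow_add_one hηpos.ne']; ring_nf
  rw [stress, stress, if_neg (hne _ (right_mem_segment ℝ ξ (ξ + η))),
    if_neg (hne _ (left_mem_segment ℝ ξ (ξ + η))), ← smul_sub, norm_smul,
    norm_gradient_sub_gradient, Real.norm_eq_abs, abs_of_pos (by positivity)]
  calc 1 / p * ‖fderiv ℝ (fun y => H y ^ p) (ξ + η) - fderiv ℝ (fun y => H y ^ p) ξ‖
      ≤ 1 / p * (M * H η ^ (p - 2) * (H η / c)) := by gcongr; exact hmv.trans (by gcongr)
    _ = M / (p * c) * H η ^ (p - 1) := by rw [← hpow]; field_simp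

end Stress

theorem stmt11 (n : ℕ) (p : ℝ) (hp1 : 1 < p) (hp2 : p ≤ 2)
    (H : EuclideanSpace ℝ (Fin n) → ℝ)
    (Hadd : ∀ x y, H (x + y) ≤ H x + H y)
    (Hsmul : ∀ (c : ℝ) x, H (c • x) = |c| * H x)
    (Hpos : ∀ x, x ≠ 0 → 0 < H x)
    (cH CH : ℝ) (hcH : 0 < cH)
    (hequiv : ∀ ξ, cH * ‖ξ‖ ≤ H ξ ∧ H ξ ≤ CH * ‖ξ‖)
    (Hsmooth : ContDiffOn ℝ 2 H ({0}ᶜ : Set (EuclideanSpace ℝ (Fin n))))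
    (CpH : ℝ)
    (hHess : ∀ ξ : EuclideanSpace ℝ (Fin n), ξ ≠ 0 →
      ‖iteratedFDeriv ℝ 2 (fun η => H η ^ p) ξ‖ ≤ CpH * H ξ ^ (p - 2)) :
    ∃ c : ℝ, ∀ (ξ η : EuclideanSpace ℝ (Fin n)), η ≠ 0 →
      ‖stress p H (ξ + η) - stress p H ξ‖ ≤ c * H η ^ (p - 1) := by
  refine ⟨max (2 * CH * 3 ^ (p - 1)) (CpH / (p * cH)), fun ξ η hη => ?_⟩
  have hηpos := Hpos η hη
  have hCH : 0 ≤ CH := hcH.le.trans <|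
    le_of_mul_le_mul_right ((hequiv η).1.trans (hequiv η).2) (norm_pos_iff.mpr hη)
  have hCpH : 0 ≤ CpH :=
    nonneg_of_mul_nonneg_left ((norm_nonneg _).trans (hHess η hη)) (by positivity)
  have hpow_nonneg : 0 ≤ H η ^ (p - 1) := by positivity
  rcases le_or_gt (H ξ) (2 * H η) with hnear | hfar
  · refine (norm_stress_add_sub_le_of_le_two_mul hp1.le Hadd Hsmul Hpos hCH
      (fun x => (hequiv x).2) (Hsmooth.differentiableOn two_ne_zero) hnear).trans ?_
    exact mul_le_mul_of_nonneg_right (le_max_left _ _) hpow_nonneg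
  · refine (norm_stress_add_sub_le_of_two_mul_lt hp1.le hp2 Hadd Hsmul Hpos hcH
      (fun x => (hequiv x).1) Hsmooth hCpH hHess hη hfar).trans ?_
    exact mul_le_mul_of_nonneg_right (le_max_right _ _) hpow_nonneg
end

section
/- Let A be a real n×n symmetric positive definite matrix whose eigenvalue ratio satisfies λ_min(A)/λ_max(A) ≥ ϱ for some ϱ ∈ (0,1], and let S be a symmetric n×n matrix. Set W = A S and let W̊ = W − (tr W / n) Id be the traceless part of W. Then (tr W)² relates to |W|² by tr[W²] ≥ |W|² − c |W̊|², where c = (1−ϱ)²/(1+ϱ²) ∈ [0,1). -/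
/-!
Diagonalise `A = U D Uᵀ` with `D = diag λ` and put `M = Uᵀ S U`, which is symmetric. Then `W` is
conjugate to `B = D M`, so `|W|² = ∑ λᵢ² Mᵢⱼ²` and `tr W² = ∑ λᵢ λⱼ Mᵢⱼ²`, whence
`|W|² - tr W² = ½ ∑ (λᵢ - λⱼ)² Mᵢⱼ²`. The eigenvalue ratio bound gives
`(λᵢ - λⱼ)² ≤ c (λᵢ² + λⱼ²)`, so this is at most `c` times the off-diagonal part of `|B|²`,
which by Cauchy–Schwarz on the diagonal is at most `|B|² - (tr B)² / n = |W̊|²`.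
-/

open Finset Matrix Unitary

theorem sq_sub_le_of_mul_le {ϱ a b : ℝ} (hab : ϱ * b ≤ a) (hba : ϱ * a ≤ b) :
    (a - b) ^ 2 ≤ (1 - ϱ) ^ 2 / (1 + ϱ ^ 2) * (a ^ 2 + b ^ 2) := by
  rw [div_mul_eq_mul_div, le_div_iff₀ (by positivity)]
  nlinarith [mul_nonneg (sub_nonneg.2 hab) (sub_nonneg.2 hba)]

theorem Finset.sum_sum_le_of_add_swap_le {ι : Type*} [Fintype ι] {f g : ι → ι → ℝ}
    (h : ∀ i j, f i j + f j i ≤ g i j + g j i) : ∑ i, ∑ j, f i j ≤ ∑ i, ∑ j, g i j := by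
  have hsum := sum_le_sum fun i (_ : i ∈ univ) => sum_le_sum fun j (_ : j ∈ univ) => h i j
  simp only [sum_add_distrib] at hsum
  rw [sum_comm (f := fun i j => f j i), sum_comm (f := fun i j => g j i)] at hsum
  linarith

namespace Matrix

variable {ι : Type*} [Fintype ι]

theorem sum_sum_sq_eq_trace_mul_star (X : Matrix ι ι ℝ) :
    ∑ i, ∑ j, X i j ^ 2 = (X * star X).trace := by
  simp [trace, diag, mul_apply, pow_two]

theorem trace_sq_div_card_le_sum_diag_sq (X : Matrix ι ι ℝ) :
    X.trace ^ 2 / Fintype.card ι ≤ ∑ i, X i i ^ 2 := by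
  refine div_le_of_le_mul₀ (by positivity) (by positivity) ?_
  rw [mul_comm]
  exact sq_sum_le_card_mul_sum_sq

variable [DecidableEq ι]

theorem trace_conjStarAlgAut {R : Type*} [CommRing R] [StarRing R]
    (u : unitary (Matrix ι ι R)) (X : Matrix ι ι R) :
    (conjStarAlgAut R _ u X).trace = X.trace := by
  rw [conjStarAlgAut_apply, trace_mul_cycle, coe_star_mul_self, Matrix.one_mul]

theorem sum_sum_sq_conjStarAlgAut (u : unitary (Matrix ι ι ℝ)) (X : Matrix ι ι ℝ) :
    ∑ i, ∑ j, conjStarAlgAut ℝ _ u X i j ^ 2 = ∑ i, ∑ j, X i j ^ 2 := by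
  rw [sum_sum_sq_eq_trace_mul_star, sum_sum_sq_eq_trace_mul_star, ← map_star, ← map_mul,
    trace_conjStarAlgAut]

theorem sum_sum_sq_sub_smul_one (X : Matrix ι ι ℝ) (s : ℝ) :
    ∑ i, ∑ j, (X - s • 1) i j ^ 2
      = ∑ i, ∑ j, X i j ^ 2 - 2 * s * X.trace + Fintype.card ι * s ^ 2 := by
  have hentry : ∀ i j, (X - s • 1) i j ^ 2
      = X i j ^ 2 - if i = j then 2 * s * X i j - s ^ 2 else 0 := by
    intro i j
    by_cases h : i = j <;> simp [h]; ring
  simp only [hentry, sum_sub_distrib, sum_ite_eq, mem_univ, if_true, ← mul_sum, trace, diag,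
    sum_const, card_univ, nsmul_eq_mul]
  ring

theorem sum_sum_sq_sub_trace_div_card_smul_one (X : Matrix ι ι ℝ) :
    ∑ i, ∑ j, (X - (X.trace / Fintype.card ι) • 1) i j ^ 2
      = ∑ i, ∑ j, X i j ^ 2 - X.trace ^ 2 / Fintype.card ι := by
  rw [sum_sum_sq_sub_smul_one]
  rcases eq_or_ne (Fintype.card ι : ℝ) 0 with h | h
  · simp [h]
  · field_simp
    ring

theorem sum_sum_sq_sub_trace_mul_self_le {B : Matrix ι ι ℝ} {c : ℝ}
    (h : ∀ i j, i ≠ j → (B i j - B j i) ^ 2 ≤ c * (B i j ^ 2 + B j i ^ 2)) :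
    ∑ i, ∑ j, B i j ^ 2 - (B * B).trace ≤ c * (∑ i, ∑ j, B i j ^ 2 - ∑ i, B i i ^ 2) := by
  have hdiag : ∑ i, B i i ^ 2 = ∑ i, ∑ j, if i = j then B i j ^ 2 else 0 := by
    simp only [sum_ite_eq, mem_univ, if_true]
  rw [hdiag]
  simp only [trace, diag, mul_apply, ← sum_sub_distrib, mul_sum]
  refine sum_sum_le_of_add_swap_le fun i j => ?_
  rcases eq_or_ne i j with rfl | hij
  · simp [pow_two]
  · simp only [if_neg hij, if_neg hij.symm, sub_zero]
    linear_combination h i j hij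

theorem diagonal_mul_sub_swap_sq_le {d : ι → ℝ} {M : Matrix ι ι ℝ} (hM : M.IsSymm) {ϱ : ℝ}
    (hd : ∀ i j, ϱ * d j ≤ d i) (i j : ι) :
    ((diagonal d * M) i j - (diagonal d * M) j i) ^ 2
      ≤ (1 - ϱ) ^ 2 / (1 + ϱ ^ 2) * ((diagonal d * M) i j ^ 2 + (diagonal d * M) j i ^ 2) := by
  simp only [diagonal_mul, hM.apply i j]
  linear_combination mul_le_mul_of_nonneg_right (sq_sub_le_of_mul_le (hd i j) (hd j i))
    (sq_nonneg (M i j))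

end Matrix

theorem stmt15_general (n : ℕ) (A S : Matrix (Fin n) (Fin n) ℝ)
    (hA : A.PosDef) (hS : S.IsSymm) (ϱ : ℝ)
    (hratio : ∀ i j, ϱ * hA.1.eigenvalues j ≤ hA.1.eigenvalues i) :
    ((A * S) * (A * S)).trace ≥
      (∑ i, ∑ j, ((A * S) i j) ^ 2) -
        ((1 - ϱ) ^ 2 / (1 + ϱ ^ 2)) *
          (∑ i, ∑ j,
            (((A * S) - (((A * S).trace) / (n : ℝ)) • (1 : Matrix (Fin n) (Fin n) ℝ)) i j) ^ 2) := by
  set u := hA.1.eigenvectorUnitary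
  set M := conjStarAlgAut ℝ _ (star u) S
  set B := diagonal hA.1.eigenvalues * M
  have hA_eq : A = conjStarAlgAut ℝ _ u (diagonal hA.1.eigenvalues) := by
    simpa using hA.1.spectral_theorem
  have hW : A * S = conjStarAlgAut ℝ _ u B := by
    rw [map_mul, ← hA_eq, ← conjStarAlgAut_mul_apply, Unitary.mul_star_self, map_one,
      StarAlgEquiv.one_apply]
  have hM : M.IsSymm := isHermitian_iff_isSymm.1 <|
    ((isHermitian_iff_isSymm.2 hS).isSelfAdjoint.map (conjStarAlgAut ℝ _ (star u))).isHermitian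
  have hoff := sum_sum_sq_sub_trace_mul_self_le
    fun i j _ => diagonal_mul_sub_swap_sq_le hM hratio i j
  have hcs := trace_sq_div_card_le_sum_diag_sq B
  have htl := sum_sum_sq_sub_trace_div_card_smul_one (A * S)
  rw [Fintype.card_fin] at hcs htl
  have hc : 0 ≤ (1 - ϱ) ^ 2 / (1 + ϱ ^ 2) := by positivity
  rw [htl, hW, ← map_mul, trace_conjStarAlgAut, sum_sum_sq_conjStarAlgAut, trace_conjStarAlgAut]
  linarith [mul_le_mul_of_nonneg_left hcs hc]

theorem stmt15 (n : ℕ) (hn : 0 < n) (A S : Matrix (Fin n) (Fin n) ℝ)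
    (hA : A.PosDef) (hS : S.IsSymm) (ϱ : ℝ) (hϱ0 : 0 < ϱ) (hϱ1 : ϱ ≤ 1)
    (hratio : ∀ i j, ϱ * hA.1.eigenvalues j ≤ hA.1.eigenvalues i) :
    ((A * S) * (A * S)).trace ≥
      (∑ i, ∑ j, ((A * S) i j) ^ 2) -
        ((1 - ϱ) ^ 2 / (1 + ϱ ^ 2)) *
          (∑ i, ∑ j,
            (((A * S) - (((A * S).trace) / (n : ℝ)) • (1 : Matrix (Fin n) (Fin n) ℝ)) i j) ^ 2) :=
  stmt15_general n A S hA hS ϱ hratio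
end
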